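/- arXiv:1503.00668 — 2 statements merged into one kernel-verified Lean document; each statement's English description precedes it below -/
import Mathlib

section
/- Let R be an integral domain of characteristic zero, l ≥ 2, and for y ∈ R define Z_y(T) as the 2l×2l matrix [[diag(T,1,…,1), y I_l], [-I_l, 0]] over R[T]. Then for any k ≥ 1 and y₁, …, y_k ∈ R, the trace of Z_{y₁}(T) ⋯ Z_{y_k}(T) is a polynomial in T of degree exactly k. -/
open Matrix Polynomial

/-- The matrix `Z_y(T) = [[diag(T,1,…,1), y I_l], [-I_l, 0]]` over `R[T]`. -/
noncomputable def Zmat {R : Type*} [CommRing R] (l : ℕ) (hl : 1 ≤ l) (y : R) :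
    Matrix (Fin l ⊕ Fin l) (Fin l ⊕ Fin l) (Polynomial R) :=
  fromBlocks (diagonal fun i => if i = (⟨0, hl⟩ : Fin l) then X else 1) (C y • 1) (-1) 0

section Aux

variable {R : Type*} [CommRing R]

private lemma Zmat_apply_00' (l : ℕ) (hl : 1 ≤ l) (y : R) :
    Zmat l hl y (Sum.inl ⟨0, hl⟩) (Sum.inl ⟨0, hl⟩) = X := by
  simp [Zmat]

private lemma Zmat_deg' (l : ℕ) (hl : 1 ≤ l) (y : R) (i j : Fin l ⊕ Fin l)
    (h : ¬(i = Sum.inl ⟨0, hl⟩ ∧ j = Sum.inl ⟨0, hl⟩)) :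
    (Zmat l hl y i j).degree ≤ 0 := by
  rcases i with a | a <;> rcases j with b | b
  · have : ¬(a = ⟨0, hl⟩ ∧ b = ⟨0, hl⟩) := by
      intro ⟨h1, h2⟩; exact h ⟨by rw [h1], by rw [h2]⟩
    simp only [Zmat, fromBlocks_apply₁₁, diagonal_apply]
    split_ifs with h1 h2
    · exact absurd ⟨h2, h1.symm.trans h2⟩ this
    · exact degree_one_le
    · exact degree_zero.le.trans bot_le
  · simp only [Zmat, fromBlocks_apply₁₂, Matrix.smul_apply, Matrix.one_apply, smul_eq_mul]
    split_ifs
    · simpa using degree_C_le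
    · simp
  · simp only [Zmat, fromBlocks_apply₂₁, Matrix.neg_apply, Matrix.one_apply]
    split_ifs <;> simp
  · simp [Zmat]

private lemma step (l : ℕ) (hl : 1 ≤ l) (y : R) (k : ℕ)
    (P : Matrix (Fin l ⊕ Fin l) (Fin l ⊕ Fin l) R[X])
    (h1 : ∀ i j, ¬(i = Sum.inl ⟨0, hl⟩ ∧ j = Sum.inl ⟨0, hl⟩) → (P i j).degree < (k : WithBot ℕ))
    (h2 : (P (Sum.inl ⟨0, hl⟩) (Sum.inl ⟨0, hl⟩) - X ^ k).degree < (k : WithBot ℕ)) :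
    (∀ i j, ¬(i = Sum.inl ⟨0, hl⟩ ∧ j = Sum.inl ⟨0, hl⟩) →
        ((Zmat l hl y * P) i j).degree < ((k + 1 : ℕ) : WithBot ℕ)) ∧
      ((Zmat l hl y * P) (Sum.inl ⟨0, hl⟩) (Sum.inl ⟨0, hl⟩) - X ^ (k + 1)).degree
        < ((k + 1 : ℕ) : WithBot ℕ) := by
  set n0 : Fin l ⊕ Fin l := Sum.inl ⟨0, hl⟩ with hn0
  -- bound on all entries of P
  have hPle : ∀ m j, (P m j).degree ≤ (k : ℕ) := by
    intro m j
    by_cases hmj : m = n0 ∧ j = n0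
    · rw [hmj.1, hmj.2]
      have : P n0 n0 = (P n0 n0 - X ^ k) + X ^ k := by ring
      rw [this]
      exact degree_add_le _ _ |>.trans (max_le h2.le (degree_X_pow_le k))
    · exact (h1 m j hmj).le
  have hterm2 : ∀ (i j m : Fin l ⊕ Fin l), ¬(i = n0 ∧ m = n0) →
      (Zmat l hl y i m * P m j).degree < ((k + 1 : ℕ) : WithBot ℕ) := by
    intro i j m him
    refine (degree_mul_le _ _).trans_lt ?_
    push_cast
    calc (Zmat l hl y i m).degree + (P m j).degree
        ≤ 0 + (k : WithBot ℕ) := add_le_add (Zmat_deg' l hl y i m him) (hPle m j)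
      _ = (k : WithBot ℕ) := zero_add _
      _ < (k : WithBot ℕ) + 1 := by
          rw [show ((k : WithBot ℕ) + 1) = ((k+1 : ℕ) : WithBot ℕ) by push_cast; ring]
          exact_mod_cast Nat.lt_succ_self k
  have hterm : ∀ i j, ¬(i = n0 ∧ j = n0) → ∀ m,
      (Zmat l hl y i m * P m j).degree < ((k + 1 : ℕ) : WithBot ℕ) := by
    intro i j hij m
    by_cases him : i = n0 ∧ m = n0
    · have hj : j ≠ n0 := fun hj => hij ⟨him.1, hj⟩
      rw [him.1, him.2, hn0, Zmat_apply_00', ← hn0]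
      refine (degree_mul_le _ _).trans_lt ?_
      push_cast
      calc degree (X : R[X]) + (P n0 j).degree
          ≤ 1 + (P n0 j).degree := add_le_add degree_X_le le_rfl
        _ < 1 + (k : WithBot ℕ) :=
            WithBot.add_lt_add_left (by decide) (h1 n0 j (fun h => hj h.2))
        _ = (k : WithBot ℕ) + 1 := add_comm _ _
    · exact hterm2 i j m him
  have hbotlt : (⊥ : WithBot ℕ) < ((k + 1 : ℕ) : WithBot ℕ) := WithBot.bot_lt_coe _
  constructor
  · intro i j hij
    rw [Matrix.mul_apply]
    refine (degree_sum_le _ _).trans_lt ?_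
    rw [Finset.sup_lt_iff hbotlt]
    intro m _
    exact hterm i j hij m
  · rw [Matrix.mul_apply, Fintype.sum_eq_add_sum_compl n0 (fun m => Zmat l hl y n0 m * P m n0)]
    rw [hn0, Zmat_apply_00', ← hn0]
    have hrw : X * P n0 n0 + (∑ m ∈ {n0}ᶜ, Zmat l hl y n0 m * P m n0) - X ^ (k + 1)
        = X * (P n0 n0 - X ^ k) + (∑ m ∈ {n0}ᶜ, Zmat l hl y n0 m * P m n0) := by
      ring
    rw [hrw]
    refine (degree_add_le _ _).trans_lt (max_lt ?_ ?_)
    · refine (degree_mul_le _ _).trans_lt ?_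
      calc degree (X : R[X]) + (P n0 n0 - X ^ k).degree
          ≤ 1 + (P n0 n0 - X ^ k).degree := add_le_add degree_X_le le_rfl
        _ < 1 + (k : WithBot ℕ) := WithBot.add_lt_add_left (by decide) h2
        _ = ((k + 1 : ℕ) : WithBot ℕ) := by push_cast; ring
    · refine (degree_sum_le _ _).trans_lt ?_
      rw [Finset.sup_lt_iff hbotlt]
      intro m hm
      have hm' : m ≠ n0 := by simpa using hm
      exact hterm2 n0 n0 m (fun h => hm' h.2)


private lemma good_prod (l : ℕ) (hl : 1 ≤ l) (L : List R) (hne : L ≠ []) :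
    (∀ i j, ¬(i = Sum.inl ⟨0, hl⟩ ∧ j = Sum.inl ⟨0, hl⟩) →
        ((L.map (Zmat l hl)).prod i j).degree < (L.length : WithBot ℕ)) ∧
      ((L.map (Zmat l hl)).prod (Sum.inl ⟨0, hl⟩) (Sum.inl ⟨0, hl⟩)
        - X ^ L.length).degree < (L.length : WithBot ℕ) := by
  induction L with
  | nil => exact absurd rfl hne
  | cons y L ih =>
    rcases eq_or_ne L [] with hL | hL
    · subst hL
      simp only [List.map_cons, List.map_nil, List.prod_cons, List.prod_nil, mul_one,
        List.length_cons, List.length_nil, Nat.zero_add, pow_one]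
      constructor
      · intro i j hij
        exact (Zmat_deg' l hl y i j hij).trans_lt (by exact_mod_cast WithBot.coe_lt_coe.2 one_pos)
      · rw [Zmat_apply_00', sub_self]
        exact lt_of_le_of_lt bot_le (by exact_mod_cast WithBot.coe_lt_coe.2 one_pos)
    · obtain ⟨ih1, ih2⟩ := ih hL
      have := step l hl y L.length ((L.map (Zmat l hl)).prod) ih1 ih2
      simpa only [List.map_cons, List.prod_cons, List.length_cons] using this

end Aux

/-- Over an integral domain `R` of characteristic zero, for any `k ≥ 1` and
`y₁, …, y_k ∈ R`, the trace of `Z_{y₁}(T) ⋯ Z_{y_k}(T)` is a polynomial of degree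
exactly `k`. -/
theorem trace_Zmat_prod_degree (R : Type*) [CommRing R] [IsDomain R] [CharZero R]
    (l : ℕ) (hl : 2 ≤ l) (k : ℕ) (hk : 1 ≤ k) (y : Fin k → R) :
    (Matrix.trace (List.ofFn fun i => Zmat l (le_trans one_le_two hl) (y i)).prod).degree
      = (k : ℕ) := by
  have hl1 : 1 ≤ l := le_trans one_le_two hl
  set n0 : Fin l ⊕ Fin l := Sum.inl ⟨0, hl1⟩ with hn0
  have hofn : (List.ofFn fun i => Zmat l hl1 (y i)) = (List.ofFn y).map (Zmat l hl1) := by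
    rw [List.map_ofFn]; rfl
  have hne : (List.ofFn y) ≠ [] := by
    intro h
    have := congrArg List.length h
    simp at this
    omega
  obtain ⟨g1, g2⟩ := good_prod l hl1 (List.ofFn y) hne
  set P := ((List.ofFn y).map (Zmat l hl1)).prod with hP
  have hlen : (List.ofFn y).length = k := List.length_ofFn
  rw [hofn, ← hP]
  rw [hlen] at g1 g2
  have htr : Matrix.trace P = X ^ k + ((P n0 n0 - X ^ k) + ∑ m ∈ {n0}ᶜ, P m m) := by
    rw [Matrix.trace, Fintype.sum_eq_add_sum_compl n0 (fun m => Matrix.diag P m)]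
    simp only [Matrix.diag]
    ring
  rw [htr]
  have hq : ((P n0 n0 - X ^ k) + ∑ m ∈ {n0}ᶜ, P m m).degree < (k : WithBot ℕ) := by
    refine (degree_add_le _ _).trans_lt (max_lt g2 ?_)
    refine (degree_sum_le _ _).trans_lt ?_
    rw [Finset.sup_lt_iff (WithBot.bot_lt_coe _)]
    intro m hm
    have hm' : m ≠ n0 := by simpa using hm
    exact g1 m m (fun h => hm' h.1)
  rw [degree_add_eq_left_of_degree_lt (by rw [degree_X_pow]; exact hq), degree_X_pow]
end

section
/- Let R be an integral domain of characteristic zero, l ≥ 2, and Z(T) the 2l×2l matrix [[T²+1, -T],[-T, 1]] ⊕ I_{l-2} ⊕ [[1, T],[T, T²+1]] ⊕ I_{l-2} over R[T]. Then for every positive integer k, the trace of Z(T)^k is a non-constant polynomial in T with integer coefficients (of degree 2k). -/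
open Matrix Polynomial

/-- Block-diagonal sum of four square matrices. -/
def quadBlock {α : Type*} [Zero α] {m : ℕ}
    (A : Matrix (Fin 2) (Fin 2) α) (B : Matrix (Fin m) (Fin m) α)
    (C : Matrix (Fin 2) (Fin 2) α) (D : Matrix (Fin m) (Fin m) α) :
    Matrix ((Fin 2 ⊕ Fin m) ⊕ (Fin 2 ⊕ Fin m)) ((Fin 2 ⊕ Fin m) ⊕ (Fin 2 ⊕ Fin m)) α :=
  fromBlocks (fromBlocks A 0 0 B) 0 0 (fromBlocks C 0 0 D)

lemma quadBlock_pow {α : Type*} [CommRing α] {m : ℕ}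
    (A : Matrix (Fin 2) (Fin 2) α) (B : Matrix (Fin m) (Fin m) α)
    (C : Matrix (Fin 2) (Fin 2) α) (D : Matrix (Fin m) (Fin m) α) (k : ℕ) :
    (quadBlock A B C D) ^ k = quadBlock (A^k) (B^k) (C^k) (D^k) := by
  induction k with
  | zero => simp [quadBlock, Matrix.fromBlocks_one]
  | succ n ih =>
      rw [pow_succ, ih, pow_succ, pow_succ, pow_succ, pow_succ]
      simp [quadBlock, Matrix.fromBlocks_multiply]

lemma trace_quadBlock {α : Type*} [AddCommMonoid α] {m : ℕ}
    (A : Matrix (Fin 2) (Fin 2) α) (B : Matrix (Fin m) (Fin m) α)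
    (C : Matrix (Fin 2) (Fin 2) α) (D : Matrix (Fin m) (Fin m) α) :
    (quadBlock A B C D).trace = A.trace + B.trace + C.trace + D.trace := by
  simp [quadBlock, Matrix.trace, Fintype.sum_sum_type, Matrix.fromBlocks, Matrix.diag]
  abel

lemma quadBlock_map {α β : Type*} [Zero α] [Zero β] {m : ℕ} (f : α → β) (h0 : f 0 = 0)
    (A : Matrix (Fin 2) (Fin 2) α) (B : Matrix (Fin m) (Fin m) α)
    (C : Matrix (Fin 2) (Fin 2) α) (D : Matrix (Fin m) (Fin m) α) :
    (quadBlock A B C D).map f = quadBlock (A.map f) (B.map f) (C.map f) (D.map f) := by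
  simp [quadBlock, Matrix.fromBlocks_map, Matrix.map_zero _ h0]

lemma monicX2p2 : ((X:Polynomial ℤ)^2+2).Monic := by monicity!

lemma natDegX2p2 : ((X:Polynomial ℤ)^2+2).natDegree = 2 := by compute_degree!

lemma trace_pow_monic (M : Matrix (Fin 2) (Fin 2) (Polynomial ℤ))
    (hM : M * M = ((X:Polynomial ℤ)^2+2) • M - 1)
    (htr : M.trace = (X:Polynomial ℤ)^2+2) (k : ℕ) :
    ((M^(k+1)).trace).Monic ∧ ((M^(k+1)).trace).natDegree = 2*k+2 ∧
      ((M^k).trace).natDegree ≤ 2*k := by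
  induction k with
  | zero =>
      refine ⟨by simpa [htr] using monicX2p2, ?_, ?_⟩
      · rw [pow_one, htr]; compute_degree!
      · simp [Matrix.trace]
  | succ n ih =>
      obtain ⟨h1, h2, h3⟩ := ih
      have key : (M^(n+2)).trace = ((X:Polynomial ℤ)^2+2) * (M^(n+1)).trace + (-(M^n).trace) := by
        have e1 : M^(n+2) = ((X:Polynomial ℤ)^2+2) • M^(n+1) - M^n := by
          have : M^(n+2) = M^n * (M*M) := by rw [pow_succ, pow_succ, mul_assoc]
          rw [this, hM, mul_sub, mul_one, mul_smul_comm, ← pow_succ]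
        rw [e1, Matrix.trace_sub, Matrix.trace_smul, smul_eq_mul, sub_eq_add_neg]
      have hp : (((X:Polynomial ℤ)^2+2) * (M^(n+1)).trace).Monic := monicX2p2.mul h1
      have hdp : (((X:Polynomial ℤ)^2+2) * (M^(n+1)).trace).natDegree = 2*n+4 := by
        rw [monicX2p2.natDegree_mul h1, h2, natDegX2p2]; ring
      have hlt : (-(M^n).trace).degree < (((X:Polynomial ℤ)^2+2) * (M^(n+1)).trace).degree := by
        rw [Polynomial.degree_eq_natDegree hp.ne_zero, hdp, Polynomial.degree_neg]
        calc ((M^n).trace).degree ≤ ((M^n).trace).natDegree := Polynomial.degree_le_natDegree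
          _ ≤ ((2*n : ℕ) : WithBot ℕ) := by exact_mod_cast h3
          _ < ((2*n+4 : ℕ) : WithBot ℕ) := by exact_mod_cast (by omega : 2*n < 2*n+4)
      refine ⟨?_, ?_, ?_⟩
      · rw [show n+1+1 = n+2 from rfl, key]; exact hp.add_of_left hlt
      · rw [show n+1+1 = n+2 from rfl]
        have hdeq : (M^(n+2)).trace.degree = (((X:Polynomial ℤ)^2+2) * (M^(n+1)).trace).degree := by
          rw [key]; exact Polynomial.degree_add_eq_left_of_degree_lt hlt
        rw [Polynomial.natDegree_eq_of_degree_eq hdeq, hdp]; ring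
      · rw [h2]; omega

/-- Over an integral domain of characteristic zero, the trace of `Z(T)^k` is a
non-constant polynomial with integer coefficients, of degree `2k`. -/
theorem trace_Zpow_int (R : Type*) [CommRing R] [IsDomain R] [CharZero R]
    (l : ℕ) (hl : 2 ≤ l) (k : ℕ) (hk : 1 ≤ k) :
    letI Z := quadBlock (α := Polynomial R) (m := l - 2)
      !![X ^ 2 + 1, -X; -X, 1] 1 !![1, X; X, X ^ 2 + 1] 1
    ∃ q : Polynomial ℤ, q.degree = (2 * k : ℕ) ∧
      Matrix.trace (Z ^ k) = q.map (Int.castRingHom R) := by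
  set m := l - 2 with hm
  set A : Matrix (Fin 2) (Fin 2) (Polynomial ℤ) := !![X ^ 2 + 1, -X; -X, 1] with hAdef
  set C : Matrix (Fin 2) (Fin 2) (Polynomial ℤ) := !![1, X; X, X ^ 2 + 1] with hCdef
  set Zℤ : Matrix ((Fin 2 ⊕ Fin m) ⊕ (Fin 2 ⊕ Fin m)) ((Fin 2 ⊕ Fin m) ⊕ (Fin 2 ⊕ Fin m))
      (Polynomial ℤ) := quadBlock A 1 C 1 with hZdef
  have hA : A * A = ((X:Polynomial ℤ)^2+2) • A - 1 := by
    refine Matrix.ext fun i j => ?_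
    fin_cases i <;> fin_cases j <;>
      simp [hAdef, Matrix.mul_apply, Fin.sum_univ_two, Matrix.one_apply, smul_eq_mul] <;> ring
  have htrA : A.trace = (X:Polynomial ℤ)^2+2 := by
    simp [hAdef, Matrix.trace_fin_two]; ring
  have hC : C * C = ((X:Polynomial ℤ)^2+2) • C - 1 := by
    refine Matrix.ext fun i j => ?_
    fin_cases i <;> fin_cases j <;>
      simp [hCdef, Matrix.mul_apply, Fin.sum_univ_two, Matrix.one_apply, smul_eq_mul] <;> ring
  have htrC : C.trace = (X:Polynomial ℤ)^2+2 := by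
    simp [hCdef, Matrix.trace_fin_two]; ring
  obtain ⟨j, rfl⟩ : ∃ j, k = j + 1 := ⟨k - 1, by omega⟩
  obtain ⟨hAm, hAd, -⟩ := trace_pow_monic A hA htrA j
  obtain ⟨hCm, hCd, -⟩ := trace_pow_monic C hC htrC j
  refine ⟨(Zℤ ^ (j+1)).trace, ?_, ?_⟩
  · have hq : (Zℤ ^ (j+1)).trace
        = (A^(j+1)).trace + (C^(j+1)).trace + (2 * m : ℕ) := by
      rw [hZdef, quadBlock_pow, trace_quadBlock, one_pow, Matrix.trace_one]
      simp only [Fintype.card_fin]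
      push_cast; ring
    have hcoeff : (Zℤ ^ (j+1)).trace.coeff (2*(j+1)) = 2 := by
      rw [hq]
      have h1 : (A^(j+1)).trace.coeff (2*(j+1)) = 1 := by
        have := hAm.coeff_natDegree
        rwa [hAd, show 2*j+2 = 2*(j+1) by ring] at this
      have h2 : (C^(j+1)).trace.coeff (2*(j+1)) = 1 := by
        have := hCm.coeff_natDegree
        rwa [hCd, show 2*j+2 = 2*(j+1) by ring] at this
      have h3 : ((2 * m : ℕ) : Polynomial ℤ).coeff (2*(j+1)) = 0 := by
        rw [Polynomial.coeff_natCast_ite]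
        simp
      rw [Polynomial.coeff_add, Polynomial.coeff_add, h1, h2, h3]
      norm_num
    have hle : (Zℤ ^ (j+1)).trace.degree ≤ ((2*(j+1) : ℕ) : WithBot ℕ) := by
      rw [hq]
      refine (Polynomial.degree_add_le _ _).trans (max_le ?_ ?_)
      · refine (Polynomial.degree_add_le _ _).trans (max_le ?_ ?_)
        · exact Polynomial.degree_le_natDegree.trans
            (by rw [hAd]; exact_mod_cast le_of_eq (by ring))
        · exact Polynomial.degree_le_natDegree.trans
            (by rw [hCd]; exact_mod_cast le_of_eq (by ring))
      · exact (Polynomial.degree_natCast_le _).trans (by exact_mod_cast Nat.zero_le _)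
    refine le_antisymm hle (Polynomial.le_degree_of_ne_zero ?_)
    rw [hcoeff]; norm_num
  · set φ : Polynomial ℤ →+* Polynomial R := Polynomial.mapRingHom (Int.castRingHom R) with hφ
    have hmapA : A.map φ = !![X ^ 2 + 1, -X; -X, 1] := by
      ext i j
      fin_cases i <;> fin_cases j <;>
        simp [hAdef, hφ, Matrix.map_apply]
    have hmapC : C.map φ = !![1, X; X, X ^ 2 + 1] := by
      ext i j
      fin_cases i <;> fin_cases j <;>
        simp [hCdef, hφ, Matrix.map_apply]
    have hmapZ : Zℤ.map φ = quadBlock (α := Polynomial R) (m := m)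
        !![X ^ 2 + 1, -X; -X, 1] 1 !![1, X; X, X ^ 2 + 1] 1 := by
      rw [hZdef, quadBlock_map _ (map_zero φ), hmapA, hmapC,
        Matrix.map_one _ (map_zero φ) (map_one φ)]
    calc (quadBlock (α := Polynomial R) (m := m)
          !![X ^ 2 + 1, -X; -X, 1] 1 !![1, X; X, X ^ 2 + 1] 1 ^ (j+1)).trace
        = ((Zℤ.map φ) ^ (j+1)).trace := by rw [hmapZ]
      _ = ((Zℤ ^ (j+1)).map φ).trace := by
          rw [← RingHom.mapMatrix_apply, ← map_pow, RingHom.mapMatrix_apply]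
      _ = φ ((Zℤ ^ (j+1)).trace) := by
          have h := AddMonoidHom.map_trace φ (Zℤ ^ (j+1))
          rw [h]
      _ = ((Zℤ ^ (j+1)).trace).map (Int.castRingHom R) := rfl
end
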